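/- Let γ ∈ [0,1], p ∈ [1,∞], and let m be any positive measurable weight on ℝ³. Define the Landau bilinear operator Q(g,h) := Σ_{i,j} (a_{ij} * g) ∂_{ij} h − (c * g) h. Then there exists a constant C > 0, depending only on γ, such that for every g ∈ L¹(⟨v⟩^{γ+2}) and every Schwartz function h: ‖Q(g,h)‖_{L^p(m)} ≤ C ( ‖g‖_{L¹(⟨v⟩^{γ+2})} ‖∇²h‖_{L^p(m⟨v⟩^{γ+2})} + ‖g‖_{L¹(⟨v⟩^{γ})} ‖h‖_{L^p(m⟨v⟩^{γ})} ), where ‖∇²h‖_{L^p(m⟨v⟩^{γ+2})} stands for Σ_{i,j} ‖∂_{ij} h‖_{L^p(m⟨v⟩^{γ+2})}. -/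

import Mathlib

open MeasureTheory Real Filter ENNReal

noncomputable section

abbrev E3 : Type := EuclideanSpace ℝ (Fin 3)

/-- The standard Gaussian on ℝ³. -/
def gauss (v : E3) : ℝ :=
  (2 * π) ^ (-(3 : ℝ) / 2) * Real.exp (-‖v‖ ^ 2 / 2)

/-- `J_α(v) = ∫ |v - w|^α μ(w) dw`. -/
def Jfun (α : ℝ) (v : E3) : ℝ :=
  ∫ w : E3, ‖v - w‖ ^ α * gauss w

/-- The matrix `a_{ij}(z) = |z|^{γ+2} (δ_{ij} - z_i z_j / |z|²)` (equal to `0` at `z = 0`). -/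
def amat (γ : ℝ) (z : E3) (i j : Fin 3) : ℝ :=
  ‖z‖ ^ (γ + 2) * ((if i = j then (1 : ℝ) else 0) - z i * z j / ‖z‖ ^ 2)

/-- The entrywise convolution `ā = a * μ`. -/
def abar (γ : ℝ) (v : E3) (i j : Fin 3) : ℝ :=
  ∫ w : E3, amat γ (v - w) i j * gauss w

/-- The eigenvalue `ℓ₁(v)` of `ā(v)` in the direction `v`. -/
def ell1 (γ : ℝ) (v : E3) : ℝ :=
  ∫ w : E3, (1 - (∑ i, (v i / ‖v‖) * (w i / ‖w‖)) ^ 2) * ‖w‖ ^ (γ + 2) * gauss (v - w)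

/-- Squared norm of the cross product of two vectors of ℝ³. -/
def crossSq (u w : Fin 3 → ℝ) : ℝ :=
  (u 1 * w 2 - u 2 * w 1) ^ 2 + (u 2 * w 0 - u 0 * w 2) ^ 2 + (u 0 * w 1 - u 1 * w 0) ^ 2

/-- The eigenvalue `ℓ₂(v)` of `ā(v)` on `v^⊥`. -/
def ell2 (γ : ℝ) (v : E3) : ℝ :=
  ∫ w : E3, (1 - (1 / 2) * crossSq (fun i => v i / ‖v‖) (fun i => w i / ‖w‖)) *
    ‖w‖ ^ (γ + 2) * gauss (v - w)
/-- The partial derivative `∂_i f` in the `i`-th coordinate direction. -/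
def pd (i : Fin 3) (f : E3 → ℝ) : E3 → ℝ :=
  fun v => fderiv ℝ f v (EuclideanSpace.single i 1)

/-- The weight `⟨v⟩ = (1 + |v|²)^{1/2}`. -/
def jap (v : E3) : ℝ := Real.sqrt (1 + ‖v‖ ^ 2)

/-- `c(z) = -2 (γ+3) |z|^γ`. -/
def cfun (γ : ℝ) (z : E3) : ℝ := -2 * (γ + 3) * ‖z‖ ^ γ

/-- The Landau bilinear operator `Q(g,h) = (a_{ij} * g) ∂_{ij} h - (c * g) h`. -/
def Qop (γ : ℝ) (g h : E3 → ℝ) (v : E3) : ℝ :=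
  (∑ i, ∑ j, (∫ w : E3, amat γ (v - w) i j * g w) * pd i (pd j h) v) -
    (∫ w : E3, cfun γ (v - w) * g w) * h v

lemma jap_pos (v : E3) : 0 < jap v := Real.sqrt_pos.mpr (by positivity)

lemma one_le_jap (v : E3) : 1 ≤ jap v := by
  have h : Real.sqrt 1 ≤ Real.sqrt (1 + ‖v‖ ^ 2) :=
    Real.sqrt_le_sqrt (by nlinarith [sq_nonneg ‖v‖])
  simpa [jap] using h

lemma norm_le_jap (v : E3) : ‖v‖ ≤ jap v := by
  have h : Real.sqrt (‖v‖ ^ 2) ≤ Real.sqrt (1 + ‖v‖ ^ 2) :=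
    Real.sqrt_le_sqrt (by nlinarith)
  simpa [jap, Real.sqrt_sq (norm_nonneg v)] using h

lemma continuous_jap : Continuous jap := by
  unfold jap; fun_prop

lemma continuous_jap_rpow (e : ℝ) : Continuous fun v : E3 => jap v ^ e :=
  continuous_jap.rpow_const (fun v => Or.inl (jap_pos v).ne')

lemma norm_sub_le_jap (v w : E3) : ‖v - w‖ ≤ 2 * (jap v * jap w) := by
  have h := norm_sub_le v w
  nlinarith [norm_le_jap v, norm_le_jap w, one_le_jap v, one_le_jap w,
    norm_nonneg v, norm_nonneg w]

lemma rpow_key (e : ℝ) (he0 : 0 ≤ e) (he3 : e ≤ 3) (v w : E3) :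
    ‖v - w‖ ^ e ≤ 8 * (jap v ^ e * jap w ^ e) := by
  have h1 : ‖v - w‖ ^ e ≤ (2 * (jap v * jap w)) ^ e :=
    Real.rpow_le_rpow (norm_nonneg _) (norm_sub_le_jap v w) he0
  have h2 : (2 * (jap v * jap w)) ^ e = 2 ^ e * (jap v ^ e * jap w ^ e) := by
    rw [Real.mul_rpow (by norm_num) (mul_nonneg (jap_pos v).le (jap_pos w).le),
      Real.mul_rpow (jap_pos v).le (jap_pos w).le]
  have h3 : (2:ℝ) ^ e ≤ 2 ^ (3:ℝ) := Real.rpow_le_rpow_of_exponent_le one_le_two he3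
  have h4 : (2:ℝ) ^ (3:ℝ) = 8 := by
    rw [show (3:ℝ) = ((3:ℕ):ℝ) by norm_num, Real.rpow_natCast]; norm_num
  have h5 : 0 ≤ jap v ^ e * jap w ^ e :=
    mul_nonneg (Real.rpow_nonneg (jap_pos v).le e) (Real.rpow_nonneg (jap_pos w).le e)
  nlinarith

lemma coord_abs_le_norm (z : E3) (i : Fin 3) : |z i| ≤ ‖z‖ := by
  rw [EuclideanSpace.norm_eq]
  have h : |z i| = Real.sqrt (|z i| ^ 2) := (Real.sqrt_sq (abs_nonneg _)).symm
  rw [h]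
  apply Real.sqrt_le_sqrt
  have h2 := Finset.single_le_sum (f := fun k => ‖z k‖ ^ 2)
    (fun k _ => by positivity) (Finset.mem_univ i)
  simpa [sq_abs, Real.norm_eq_abs] using h2

lemma amat_abs_le (γ : ℝ) (z : E3) (i j : Fin 3) :
    |amat γ z i j| ≤ 2 * ‖z‖ ^ (γ + 2) := by
  rw [amat, abs_mul, abs_of_nonneg (Real.rpow_nonneg (norm_nonneg z) _)]
  have h2 : |((if i = j then (1:ℝ) else 0) - z i * z j / ‖z‖ ^ 2)| ≤ 2 := by
    have hzij : |z i * z j / ‖z‖ ^ 2| ≤ 1 := by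
      rcases eq_or_ne z 0 with rfl | hz
      · simp
      · have hz2 : (0:ℝ) < ‖z‖ ^ 2 := pow_pos (norm_pos_iff.mpr hz) 2
        rw [abs_div, abs_mul, abs_of_pos hz2, div_le_one hz2]
        calc |z i| * |z j| ≤ ‖z‖ * ‖z‖ :=
              mul_le_mul (coord_abs_le_norm z i) (coord_abs_le_norm z j)
                (abs_nonneg _) (norm_nonneg _)
          _ = ‖z‖ ^ 2 := (sq ‖z‖).symm
    have hif : |(if i = j then (1:ℝ) else 0)| ≤ 1 := by split <;> simp
    calc |((if i = j then (1:ℝ) else 0) - z i * z j / ‖z‖ ^ 2)|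
        ≤ |(if i = j then (1:ℝ) else 0)| + |z i * z j / ‖z‖ ^ 2| := abs_sub _ _
      _ ≤ 2 := by linarith
  have h3 : (0:ℝ) ≤ ‖z‖ ^ (γ + 2) := Real.rpow_nonneg (norm_nonneg z) _
  nlinarith

lemma cfun_abs_le (γ : ℝ) (hγ0 : 0 ≤ γ) (hγ1 : γ ≤ 1) (z : E3) :
    |cfun γ z| ≤ 8 * ‖z‖ ^ γ := by
  rw [cfun, abs_mul, abs_of_nonneg (Real.rpow_nonneg (norm_nonneg z) _)]
  have h3 : (0:ℝ) ≤ ‖z‖ ^ γ := Real.rpow_nonneg (norm_nonneg z) _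
  have : |(-2 : ℝ) * (γ + 3)| ≤ 8 := by rw [abs_mul]; rw [abs_of_nonneg (by linarith : (0:ℝ) ≤ γ+3)]; norm_num; linarith
  nlinarith [abs_nonneg ((-2:ℝ) * (γ+3))]

lemma pd_contDiff {f : E3 → ℝ} (hf : ContDiff ℝ ((⊤:ℕ∞) : WithTop ℕ∞) f) (i : Fin 3) :
    ContDiff ℝ ((⊤:ℕ∞) : WithTop ℕ∞) (pd i f) := by
  have h1 : ContDiff ℝ ((⊤:ℕ∞) : WithTop ℕ∞) (fderiv ℝ f) :=
    hf.fderiv_right (by exact_mod_cast le_refl _)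
  exact h1.clm_apply contDiff_const

set_option maxHeartbeats 1000000 in
/-- `‖Q(g,h)‖_{L^p(m)} ≤ C (‖g‖_{L¹(⟨v⟩^{γ+2})} ‖∇²h‖_{L^p(m⟨v⟩^{γ+2})}
 + ‖g‖_{L¹(⟨v⟩^γ)} ‖h‖_{L^p(m ⟨v⟩^γ)})`, with `C` depending only on `γ`. -/
theorem stmt14 (γ : ℝ) (hγ0 : 0 ≤ γ) (hγ1 : γ ≤ 1) :
    ∃ C > (0 : ℝ), ∀ p : ℝ≥0∞, 1 ≤ p → ∀ m : E3 → ℝ, (∀ v, 0 < m v) → Measurable m →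
      ∀ g : E3 → ℝ, Integrable (fun w : E3 => |g w| * jap w ^ (γ + 2)) →
      ∀ h : SchwartzMap E3 ℝ,
      eLpNorm (fun v => m v * Qop γ g (⇑h) v) p volume ≤
        ENNReal.ofReal C *
          (ENNReal.ofReal (∫ w : E3, |g w| * jap w ^ (γ + 2)) *
              ∑ i, ∑ j, eLpNorm (fun v => m v * jap v ^ (γ + 2) * pd i (pd j (⇑h)) v) p volume +
            ENNReal.ofReal (∫ w : E3, |g w| * jap w ^ γ) *
              eLpNorm (fun v => m v * jap v ^ γ * h v) p volume) := by
  refine ⟨64, by norm_num, ?_⟩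
  intro p hp m hm0 hmm g hg h
  set A := ∫ w : E3, |g w| * jap w ^ (γ + 2) with hAdef
  set B := ∫ w : E3, |g w| * jap w ^ γ with hBdef
  have hA0 : 0 ≤ A := integral_nonneg fun w =>
    mul_nonneg (abs_nonneg _) (Real.rpow_nonneg (jap_pos w).le _)
  have hB0 : 0 ≤ B := integral_nonneg fun w =>
    mul_nonneg (abs_nonneg _) (Real.rpow_nonneg (jap_pos w).le _)
  have hcont2 : Continuous fun w : E3 => jap w ^ (γ + 2) := continuous_jap_rpow _
  have hcontγ : Continuous fun w : E3 => jap w ^ γ := continuous_jap_rpow _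
  -- integrability of |g| ⟨w⟩^γ
  have hgabs : AEMeasurable (fun w : E3 => |g w|) := by
    have h1 : AEMeasurable (fun w : E3 => (|g w| * jap w ^ (γ + 2)) * (jap w ^ (γ + 2))⁻¹) :=
      hg.aemeasurable.mul hcont2.measurable.inv.aemeasurable
    refine h1.congr (Filter.Eventually.of_forall fun w => ?_)
    show |g w| * jap w ^ (γ + 2) * (jap w ^ (γ + 2))⁻¹ = |g w|
    exact mul_inv_cancel_right₀ (Real.rpow_pos_of_pos (jap_pos w) _).ne' _
  have hBmeas : AEStronglyMeasurable (fun w : E3 => |g w| * jap w ^ γ) volume :=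
    (hgabs.mul hcontγ.measurable.aemeasurable).aestronglyMeasurable
  have hgB : Integrable (fun w : E3 => |g w| * jap w ^ γ) := by
    refine hg.mono' hBmeas (Filter.Eventually.of_forall fun w => ?_)
    rw [Real.norm_eq_abs,
      abs_of_nonneg (mul_nonneg (abs_nonneg _) (Real.rpow_nonneg (jap_pos w).le _))]
    exact mul_le_mul_of_nonneg_left
      (Real.rpow_le_rpow_of_exponent_le (one_le_jap w) (by linarith)) (abs_nonneg _)
  -- bounds on convolution integrals
  have hboundA : ∀ (v : E3) (i j : Fin 3),
      |∫ w : E3, amat γ (v - w) i j * g w| ≤ 64 * A * jap v ^ (γ + 2) := by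
    intro v i j
    have hptw : ∀ w : E3, |amat γ (v - w) i j * g w| ≤
        (16 * jap v ^ (γ + 2)) * (|g w| * jap w ^ (γ + 2)) := by
      intro w
      rw [abs_mul]
      calc |amat γ (v - w) i j| * |g w| ≤ (2 * ‖v - w‖ ^ (γ + 2)) * |g w| :=
            mul_le_mul_of_nonneg_right (amat_abs_le γ (v - w) i j) (abs_nonneg _)
        _ ≤ (2 * (8 * (jap v ^ (γ + 2) * jap w ^ (γ + 2)))) * |g w| := by
            have := rpow_key (γ + 2) (by linarith) (by linarith) v w
            have h3 : (0:ℝ) ≤ |g w| := abs_nonneg _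
            nlinarith
        _ = (16 * jap v ^ (γ + 2)) * (|g w| * jap w ^ (γ + 2)) := by ring
    calc |∫ w : E3, amat γ (v - w) i j * g w|
        ≤ ∫ w : E3, |amat γ (v - w) i j * g w| := by
          simpa [Real.norm_eq_abs, abs_mul] using
            norm_integral_le_integral_norm (fun w : E3 => amat γ (v - w) i j * g w)
      _ ≤ ∫ w : E3, (16 * jap v ^ (γ + 2)) * (|g w| * jap w ^ (γ + 2)) :=
          integral_mono_of_nonneg (Filter.Eventually.of_forall fun w => abs_nonneg _)
            (hg.const_mul _) (Filter.Eventually.of_forall hptw)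
      _ = 16 * jap v ^ (γ + 2) * A := by rw [integral_const_mul (16 * jap v ^ (γ + 2)) fun w : E3 => |g w| * jap w ^ (γ + 2), ← hAdef]
      _ ≤ 64 * A * jap v ^ (γ + 2) := by
          nlinarith [Real.rpow_nonneg (jap_pos v).le (γ + 2)]
  have hboundC : ∀ v : E3,
      |∫ w : E3, cfun γ (v - w) * g w| ≤ 64 * B * jap v ^ γ := by
    intro v
    have hptw : ∀ w : E3, |cfun γ (v - w) * g w| ≤
        (64 * jap v ^ γ) * (|g w| * jap w ^ γ) := by
      intro w
      rw [abs_mul]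
      calc |cfun γ (v - w)| * |g w| ≤ (8 * ‖v - w‖ ^ γ) * |g w| :=
            mul_le_mul_of_nonneg_right (cfun_abs_le γ hγ0 hγ1 (v - w)) (abs_nonneg _)
        _ ≤ (8 * (8 * (jap v ^ γ * jap w ^ γ))) * |g w| := by
            have := rpow_key γ hγ0 (by linarith) v w
            have h3 : (0:ℝ) ≤ |g w| := abs_nonneg _
            nlinarith
        _ = (64 * jap v ^ γ) * (|g w| * jap w ^ γ) := by ring
    calc |∫ w : E3, cfun γ (v - w) * g w|
        ≤ ∫ w : E3, |cfun γ (v - w) * g w| := by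
          simpa [Real.norm_eq_abs, abs_mul] using
            norm_integral_le_integral_norm (fun w : E3 => cfun γ (v - w) * g w)
      _ ≤ ∫ w : E3, (64 * jap v ^ γ) * (|g w| * jap w ^ γ) :=
          integral_mono_of_nonneg (Filter.Eventually.of_forall fun w => abs_nonneg _)
            (hgB.const_mul _) (Filter.Eventually.of_forall hptw)
      _ = 64 * jap v ^ γ * B := by rw [integral_const_mul (64 * jap v ^ γ) fun w : E3 => |g w| * jap w ^ γ, ← hBdef]
      _ = 64 * B * jap v ^ γ := by ring
  -- the dominating function
  set Fij : Fin 3 → Fin 3 → E3 → ℝ :=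
    fun i j v => (64 * A) * (m v * jap v ^ (γ + 2) * |pd i (pd j (⇑h)) v|) with hFijdef
  set F0 : E3 → ℝ := fun v => (64 * B) * (m v * jap v ^ γ * |h v|) with hF0def
  have hFij0 : ∀ i j v, 0 ≤ Fij i j v := fun i j v =>
    mul_nonneg (mul_nonneg (by norm_num) hA0)
      (mul_nonneg (mul_nonneg (hm0 v).le (Real.rpow_nonneg (jap_pos v).le _))
        (abs_nonneg _))
  have hF00 : ∀ v, 0 ≤ F0 v := fun v =>
    mul_nonneg (mul_nonneg (by norm_num) hB0)
      (mul_nonneg (mul_nonneg (hm0 v).le (Real.rpow_nonneg (jap_pos v).le _))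
        (abs_nonneg _))
  -- pointwise bound
  have hpt : ∀ v, ‖m v * Qop γ g (⇑h) v‖ ≤ ‖(∑ i, ∑ j, Fij i j v) + F0 v‖ := by
    intro v
    have hG0 : 0 ≤ (∑ i, ∑ j, Fij i j v) + F0 v :=
      add_nonneg (Finset.sum_nonneg fun i _ => Finset.sum_nonneg fun j _ => hFij0 i j v)
        (hF00 v)
    rw [Real.norm_eq_abs, Real.norm_eq_abs, abs_of_nonneg hG0, abs_mul,
      abs_of_pos (hm0 v)]
    have hQ : |Qop γ g (⇑h) v| ≤
        (∑ i, ∑ j, |∫ w : E3, amat γ (v - w) i j * g w| * |pd i (pd j (⇑h)) v|) +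
          |∫ w : E3, cfun γ (v - w) * g w| * |h v| := by
      rw [Qop]
      refine (abs_sub _ _).trans (add_le_add ?_ (le_of_eq (abs_mul _ _)))
      refine (Finset.abs_sum_le_sum_abs _ _).trans (Finset.sum_le_sum fun i _ => ?_)
      refine (Finset.abs_sum_le_sum_abs _ _).trans (Finset.sum_le_sum fun j _ => ?_)
      exact le_of_eq (abs_mul _ _)
    calc m v * |Qop γ g (⇑h) v|
        ≤ m v * ((∑ i, ∑ j, |∫ w : E3, amat γ (v - w) i j * g w| * |pd i (pd j (⇑h)) v|) +
            |∫ w : E3, cfun γ (v - w) * g w| * |h v|) :=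
          mul_le_mul_of_nonneg_left hQ (hm0 v).le
      _ = (∑ i, ∑ j, m v * (|∫ w : E3, amat γ (v - w) i j * g w| * |pd i (pd j (⇑h)) v|)) +
            m v * (|∫ w : E3, cfun γ (v - w) * g w| * |h v|) := by
          rw [mul_add, Finset.mul_sum]
          congr 1
          exact Finset.sum_congr rfl fun i _ => Finset.mul_sum _ _ _
      _ ≤ (∑ i, ∑ j, Fij i j v) + F0 v := by
          refine add_le_add (Finset.sum_le_sum fun i _ => Finset.sum_le_sum fun j _ => ?_) ?_
          · calc m v * (|∫ w : E3, amat γ (v - w) i j * g w| * |pd i (pd j (⇑h)) v|)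
                ≤ m v * ((64 * A * jap v ^ (γ + 2)) * |pd i (pd j (⇑h)) v|) :=
                  mul_le_mul_of_nonneg_left
                    (mul_le_mul_of_nonneg_right (hboundA v i j) (abs_nonneg _)) (hm0 v).le
              _ = Fij i j v := by rw [hFijdef]; ring
          · calc m v * (|∫ w : E3, cfun γ (v - w) * g w| * |h v|)
                ≤ m v * ((64 * B * jap v ^ γ) * |h v|) :=
                  mul_le_mul_of_nonneg_left
                    (mul_le_mul_of_nonneg_right (hboundC v) (abs_nonneg _)) (hm0 v).le
              _ = F0 v := by rw [hF0def]; ring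
  -- measurability
  have hpdc : ∀ i j : Fin 3, Continuous (pd i (pd j (⇑h))) := fun i j =>
    (pd_contDiff (pd_contDiff (h.smooth ⊤) j) i).continuous
  have hFijm : ∀ i j : Fin 3, AEStronglyMeasurable (Fij i j) volume := fun i j =>
    (measurable_const.mul
      ((hmm.mul hcont2.measurable).mul (hpdc i j).abs.measurable)).aestronglyMeasurable
  have hF0m : AEStronglyMeasurable F0 volume :=
    (measurable_const.mul
      ((hmm.mul hcontγ.measurable).mul h.continuous.abs.measurable)).aestronglyMeasurable
  have hSm : AEStronglyMeasurable (fun v => ∑ i, ∑ j, Fij i j v) volume :=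
    Finset.aestronglyMeasurable_fun_sum _ fun i _ =>
      Finset.aestronglyMeasurable_fun_sum _ fun j _ => hFijm i j
  -- eLpNorm computations
  have step4 : ∀ i j : Fin 3, eLpNorm (Fij i j) p volume =
      ENNReal.ofReal 64 * (ENNReal.ofReal A *
        eLpNorm (fun v => m v * jap v ^ (γ + 2) * pd i (pd j (⇑h)) v) p volume) := by
    intro i j
    have e1 : Fij i j =
        (64 * A) • (fun v => m v * jap v ^ (γ + 2) * |pd i (pd j (⇑h)) v|) := rfl
    have habs : eLpNorm (fun v => m v * jap v ^ (γ + 2) * |pd i (pd j (⇑h)) v|) p volume =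
        eLpNorm (fun v => m v * jap v ^ (γ + 2) * pd i (pd j (⇑h)) v) p volume := by
      apply eLpNorm_congr_norm_ae
      filter_upwards with v
      simp [Real.norm_eq_abs, abs_mul, abs_abs]
    rw [e1, eLpNorm_const_smul, habs,
      Real.enorm_eq_ofReal (mul_nonneg (by norm_num) hA0),
      ENNReal.ofReal_mul (by norm_num : (0:ℝ) ≤ 64), mul_assoc]
  have step5 : eLpNorm F0 p volume =
      ENNReal.ofReal 64 * (ENNReal.ofReal B *
        eLpNorm (fun v => m v * jap v ^ γ * h v) p volume) := by
    have e1 : F0 = (64 * B) • (fun v => m v * jap v ^ γ * |h v|) := rfl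
    have habs : eLpNorm (fun v => m v * jap v ^ γ * |h v|) p volume =
        eLpNorm (fun v => m v * jap v ^ γ * h v) p volume := by
      apply eLpNorm_congr_norm_ae
      filter_upwards with v
      simp [Real.norm_eq_abs, abs_mul, abs_abs]
    rw [e1, eLpNorm_const_smul, habs,
      Real.enorm_eq_ofReal (mul_nonneg (by norm_num) hB0),
      ENNReal.ofReal_mul (by norm_num : (0:ℝ) ≤ 64), mul_assoc]
  calc eLpNorm (fun v => m v * Qop γ g (⇑h) v) p volume
      ≤ eLpNorm (fun v => (∑ i, ∑ j, Fij i j v) + F0 v) p volume := eLpNorm_mono hpt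
    _ ≤ eLpNorm (fun v => ∑ i, ∑ j, Fij i j v) p volume + eLpNorm F0 p volume :=
        eLpNorm_add_le hSm hF0m hp
    _ ≤ (∑ i : Fin 3, ∑ j : Fin 3, eLpNorm (Fij i j) p volume) + eLpNorm F0 p volume := by
        gcongr
        have e1 : (fun v => ∑ i, ∑ j, Fij i j v) =
            ∑ i : Fin 3, ∑ j : Fin 3, Fij i j := by
          funext v; simp [Finset.sum_apply]
        rw [e1]
        refine (eLpNorm_sum_le (fun i _ => ?_) hp).trans
          (Finset.sum_le_sum fun i _ => eLpNorm_sum_le (fun j _ => hFijm i j) hp)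
        have e2 : (∑ j : Fin 3, Fij i j) = fun v => ∑ j, Fij i j v := by
          funext v; simp [Finset.sum_apply]
        rw [e2]
        exact Finset.aestronglyMeasurable_fun_sum _ fun j _ => hFijm i j
    _ = ENNReal.ofReal 64 *
          (ENNReal.ofReal A *
              ∑ i, ∑ j, eLpNorm (fun v => m v * jap v ^ (γ + 2) * pd i (pd j (⇑h)) v) p volume +
            ENNReal.ofReal B * eLpNorm (fun v => m v * jap v ^ γ * h v) p volume) := by
        simp_rw [step4, step5, ← Finset.mul_sum]
        rw [← mul_add]
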